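/- Let q₁, q₂ ∈ ℂ ∖ {0} and set q = q₁ q₂; assume q ∉ p^ℤ (equivalently ϑ(q) ≠ 0). Then ζ^E(x) = ϑ(x q₁)ϑ(x q₂)/(ϑ(x)ϑ(x q)) has residue ϑ(q₁)ϑ(q₂)/(q·ϑ(q)) at x = q^{−1}: the function x ↦ (x − q^{−1})·ζ^E(x) tends to ϑ(q₁)ϑ(q₂)/(q·ϑ(q)) as x tends to q^{−1} with x ≠ q^{−1}. -/

import Mathlib

open Filter Topology

/-- The Jacobi theta function
`ϑ(z) = (1 − z) · ∏_{s=1}^∞ (1 − p^s z)(1 − p^s z⁻¹)/(1 − p^s)^2`. -/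
noncomputable def jTheta (p z : ℂ) : ℂ :=
  (1 - z) * ∏' s : ℕ,
    (1 - p ^ (s + 1) * z) * (1 - p ^ (s + 1) * z⁻¹) / (1 - p ^ (s + 1)) ^ 2

/-- `ζ^E(x) = ϑ(xq₁)ϑ(xq₂)/(ϑ(x)ϑ(xq₁q₂))`. -/
noncomputable def zetaE (p q₁ q₂ x : ℂ) : ℂ :=
  jTheta p (x * q₁) * jTheta p (x * q₂) / (jTheta p x * jTheta p (x * (q₁ * q₂)))

/-! `ϑ(z) = (1 - z) P(z)`, where the product `P` converges locally uniformly on `ℂ ∖ {0}`: its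
`s`-th factor is `1 + p^{s+1} (2 - z - z⁻¹) / (1 - p^{s+1})²`, a geometrically small perturbation
of `1`. So `P` is continuous there, with `P(1) = 1`, and `P(z) ≠ 0` as soon as no factor vanishes.
Since `x - q⁻¹ = -q⁻¹ (1 - xq)`, the pole of `ζ^E` at `q⁻¹` cancels against the factor `1 - xq`
of `ϑ(xq)`, leaving `-q⁻¹ ϑ(xq₁) ϑ(xq₂) / (ϑ(x) P(xq))`, continuous at `q⁻¹` because
`ϑ(q⁻¹) = -q⁻¹ ϑ(q) ≠ 0`. The same inversion formula for `ϑ` turns its value into the residue. -/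

noncomputable def jThetaFactor (p z : ℂ) (s : ℕ) : ℂ :=
  (1 - p ^ (s + 1) * z) * (1 - p ^ (s + 1) * z⁻¹) / (1 - p ^ (s + 1)) ^ 2

noncomputable def jThetaProd (p z : ℂ) : ℂ := ∏' s, jThetaFactor p z s

lemma jTheta_eq_mul_jThetaProd (p z : ℂ) : jTheta p z = (1 - z) * jThetaProd p z := rfl

section JacobiProduct

variable {p : ℂ}

lemma one_sub_norm_le_norm_one_sub_pow_succ (hp : ‖p‖ < 1) (s : ℕ) :
    1 - ‖p‖ ≤ ‖1 - p ^ (s + 1)‖ := by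
  have hpow : ‖p ^ (s + 1)‖ ≤ ‖p‖ := by
    rw [norm_pow]
    exact pow_le_of_le_one (norm_nonneg p) hp.le (Nat.succ_ne_zero s)
  have := norm_sub_norm_le (1 : ℂ) (p ^ (s + 1))
  rw [norm_one] at this
  linarith

lemma one_sub_pow_succ_ne_zero (hp : ‖p‖ < 1) (s : ℕ) : (1 : ℂ) - p ^ (s + 1) ≠ 0 :=
  norm_pos_iff.mp ((sub_pos.mpr hp).trans_le (one_sub_norm_le_norm_one_sub_pow_succ hp s))

lemma jThetaFactor_sub_one (hp : ‖p‖ < 1) {z : ℂ} (hz : z ≠ 0) (s : ℕ) :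
    jThetaFactor p z s - 1 = p ^ (s + 1) * (2 - z - z⁻¹) / (1 - p ^ (s + 1)) ^ 2 := by
  have := one_sub_pow_succ_ne_zero hp s
  unfold jThetaFactor
  field_simp
  ring

lemma norm_jThetaFactor_sub_one_le (hp : ‖p‖ < 1) {z : ℂ} (hz : z ≠ 0) (s : ℕ) :
    ‖jThetaFactor p z s - 1‖ ≤ ‖p‖ ^ (s + 1) * (2 + ‖z‖ + ‖z⁻¹‖) / (1 - ‖p‖) ^ 2 := by
  rw [jThetaFactor_sub_one hp hz, norm_div, norm_mul, norm_pow, norm_pow]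
  have hnum : ‖(2 : ℂ) - z - z⁻¹‖ ≤ 2 + ‖z‖ + ‖z⁻¹‖ := by
    have h₁ := norm_sub_le (2 - z) z⁻¹
    have h₂ := norm_sub_le (2 : ℂ) z
    norm_num at h₂
    linarith
  have hden := one_sub_norm_le_norm_one_sub_pow_succ hp s
  gcongr

lemma summable_norm_pow_succ_mul_div (hp : ‖p‖ < 1) (M : ℝ) :
    Summable fun s : ℕ => ‖p‖ ^ (s + 1) * M / (1 - ‖p‖) ^ 2 := by
  have := (summable_nat_add_iff 1).mpr (summable_geometric_of_lt_one (norm_nonneg p) hp)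
  exact (this.mul_right M).div_const _

lemma summable_norm_jThetaFactor_sub_one (hp : ‖p‖ < 1) {z : ℂ} (hz : z ≠ 0) :
    Summable fun s => ‖jThetaFactor p z s - 1‖ :=
  (summable_norm_pow_succ_mul_div hp _).of_nonneg_of_le (fun _ => norm_nonneg _)
    (norm_jThetaFactor_sub_one_le hp hz)

lemma jThetaProd_ne_zero (hp : ‖p‖ < 1) {z : ℂ} (hz : z ≠ 0)
    (hfactor : ∀ s, jThetaFactor p z s ≠ 0) : jThetaProd p z ≠ 0 := by
  have := tprod_one_add_ne_zero_of_summable (f := fun s => jThetaFactor p z s - 1)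
    (by simpa using hfactor) (summable_norm_jThetaFactor_sub_one hp hz)
  simpa [jThetaProd] using this

lemma jTheta_ne_zero (hp : ‖p‖ < 1) {z : ℂ} (hz : z ≠ 0) (hzp : ∀ n : ℤ, z ≠ p ^ n) :
    jTheta p z ≠ 0 := by
  refine mul_ne_zero (sub_ne_zero.mpr fun h => hzp 0 (by simp [← h]))
    (jThetaProd_ne_zero hp hz fun s => ?_)
  refine div_ne_zero (mul_ne_zero ?_ ?_) (pow_ne_zero _ (one_sub_pow_succ_ne_zero hp s))
  · refine sub_ne_zero.mpr fun h => hzp (-(s + 1 : ℕ)) ?_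
    rw [zpow_neg, zpow_natCast]
    exact eq_inv_of_mul_eq_one_right h.symm
  · refine sub_ne_zero.mpr fun h => hzp (s + 1 : ℕ) ?_
    rw [zpow_natCast, ← inv_inv z]
    exact (eq_inv_of_mul_eq_one_left h.symm).symm

lemma jThetaProd_one (hp : ‖p‖ < 1) : jThetaProd p 1 = 1 := by
  have hfactor (s : ℕ) : jThetaFactor p 1 s = 1 := by
    rw [jThetaFactor, inv_one, mul_one, ← sq]
    exact div_self (pow_ne_zero _ (one_sub_pow_succ_ne_zero hp s))
  simp [jThetaProd, hfactor]

lemma jTheta_inv {z : ℂ} (hz : z ≠ 0) : jTheta p z⁻¹ = -z⁻¹ * jTheta p z := by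
  have hfactor (s : ℕ) : jThetaFactor p z⁻¹ s = jThetaFactor p z s := by
    rw [jThetaFactor, jThetaFactor, inv_inv, mul_comm (1 - p ^ (s + 1) * z⁻¹)]
  rw [jTheta_eq_mul_jThetaProd, jTheta_eq_mul_jThetaProd, jThetaProd, jThetaProd,
    tprod_congr hfactor]
  field_simp
  ring

lemma continuousOn_jThetaFactor (s : ℕ) :
    ContinuousOn (fun z => jThetaFactor p z s) {0}ᶜ := by
  refine ContinuousOn.div_const ?_ _
  fun_prop (disch := exact fun z hz => hz)

lemma hasProdLocallyUniformlyOn_jThetaFactor (hp : ‖p‖ < 1) :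
    HasProdLocallyUniformlyOn (fun s z => jThetaFactor p z s) (jThetaProd p) {0}ᶜ := by
  refine hasProdLocallyUniformlyOn_of_forall_compact isOpen_compl_singleton fun K hK0 hK => ?_
  obtain ⟨M, hM⟩ := hK.exists_bound_of_continuousOn (f := fun z : ℂ => 2 + ‖z‖ + ‖z⁻¹‖)
    (by fun_prop (disch := exact fun z hz => hK0 hz))
  have hbound : ∀ᶠ s in cofinite, ∀ z ∈ K,
      ‖jThetaFactor p z s - 1‖ ≤ ‖p‖ ^ (s + 1) * M / (1 - ‖p‖) ^ 2 := by
    refine Eventually.of_forall fun s z hz => (norm_jThetaFactor_sub_one_le hp (hK0 hz) s).trans ?_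
    gcongr
    exact (le_abs_self _).trans (hM z hz)
  have := (summable_norm_pow_succ_mul_div hp M).hasProdUniformlyOn_one_add hK hbound
    fun s => ((continuousOn_jThetaFactor s).mono hK0).sub continuousOn_const
  simp only [add_sub_cancel] at this
  exact this

lemma continuousOn_jThetaProd (hp : ‖p‖ < 1) : ContinuousOn (jThetaProd p) {0}ᶜ :=
  (hasProdLocallyUniformlyOn_jThetaFactor hp).continuousOn <| Frequently.of_forall fun _ =>
    continuousOn_finsetProd _ fun s _ => continuousOn_jThetaFactor s

lemma continuousAt_jThetaProd (hp : ‖p‖ < 1) {z : ℂ} (hz : z ≠ 0) :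
    ContinuousAt (jThetaProd p) z :=
  (continuousOn_jThetaProd hp).continuousAt (isOpen_compl_singleton.mem_nhds hz)

lemma continuousAt_jTheta (hp : ‖p‖ < 1) {z : ℂ} (hz : z ≠ 0) : ContinuousAt (jTheta p) z :=
  (continuousAt_const.sub continuousAt_id).mul (continuousAt_jThetaProd hp hz)

end JacobiProduct

lemma sub_inv_mul_zetaE {p q₁ q₂ x : ℂ} (hq : q₁ * q₂ ≠ 0) (hx : x ≠ (q₁ * q₂)⁻¹) :
    (x - (q₁ * q₂)⁻¹) * zetaE p q₁ q₂ x =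
      -(q₁ * q₂)⁻¹ * (jTheta p (x * q₁) * jTheta p (x * q₂)) /
        (jTheta p x * jThetaProd p (x * (q₁ * q₂))) := by
  set q := q₁ * q₂
  have hxq : 1 - x * q ≠ 0 := sub_ne_zero.mpr fun h => hx (eq_inv_of_mul_eq_one_left h.symm)
  have hsub : x - q⁻¹ = -q⁻¹ * (1 - x * q) := by field_simp; ring
  rw [zetaE, jTheta_eq_mul_jThetaProd p (x * q), hsub, mul_left_comm (jTheta p x),
    ← mul_div_mul_left _ (jTheta p x * jThetaProd p (x * q)) hxq]
  ring

theorem zetaE_residue_at_q_inv_general (p : ℂ)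
    (hp1 : ‖p‖ < 1)
    (q₁ q₂ : ℂ) (hq₁ : q₁ ≠ 0) (hq₂ : q₂ ≠ 0)
    (hq : ∀ n : ℤ, q₁ * q₂ ≠ p ^ n) :
    Tendsto (fun x : ℂ => (x - (q₁ * q₂)⁻¹) * zetaE p q₁ q₂ x) (𝓝[≠] (q₁ * q₂)⁻¹)
      (𝓝 (jTheta p q₁ * jTheta p q₂ / ((q₁ * q₂) * jTheta p (q₁ * q₂)))) := by
  set q := q₁ * q₂ with hq_def
  have hq0 : q ≠ 0 := mul_ne_zero hq₁ hq₂
  have hθq : jTheta p q ≠ 0 := jTheta_ne_zero hp1 hq0 hq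
  have hθ_mul {c : ℂ} (hc : c ≠ 0) : ContinuousAt (fun x => jTheta p (x * c)) q⁻¹ :=
    (continuousAt_jTheta hp1 (mul_ne_zero (inv_ne_zero hq0) hc)).comp (f := (· * c)) (by fun_prop)
  have hprod : ContinuousAt (fun x => jThetaProd p (x * q)) q⁻¹ :=
    (continuousAt_jThetaProd hp1 (by simp [hq0])).comp (f := (· * q)) (by fun_prop)
  have hden : jTheta p q⁻¹ * jThetaProd p (q⁻¹ * q) ≠ 0 := by
    rw [inv_mul_cancel₀ hq0, jThetaProd_one hp1, mul_one, jTheta_inv hq0]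
    exact mul_ne_zero (neg_ne_zero.mpr (inv_ne_zero hq0)) hθq
  have hlim : ContinuousAt (fun x => -q⁻¹ * (jTheta p (x * q₁) * jTheta p (x * q₂)) /
      (jTheta p x * jThetaProd p (x * q))) q⁻¹ :=
    (continuousAt_const.mul ((hθ_mul hq₁).mul (hθ_mul hq₂))).div
      ((continuousAt_jTheta hp1 (inv_ne_zero hq0)).mul hprod) hden
  have hvalue : -q⁻¹ * (jTheta p (q⁻¹ * q₁) * jTheta p (q⁻¹ * q₂)) /
      (jTheta p q⁻¹ * jThetaProd p (q⁻¹ * q)) = jTheta p q₁ * jTheta p q₂ / (q * jTheta p q) := by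
    have hq₁' : q⁻¹ * q₁ = q₂⁻¹ := by rw [hq_def]; field_simp
    have hq₂' : q⁻¹ * q₂ = q₁⁻¹ := by rw [hq_def]; field_simp
    rw [hq₁', hq₂', inv_mul_cancel₀ hq0, jThetaProd_one hp1, jTheta_inv hq₁, jTheta_inv hq₂,
      jTheta_inv hq0]
    field_simp
    ring
  rw [← hvalue]
  refine (hlim.tendsto.mono_left nhdsWithin_le_nhds).congr' ?_
  filter_upwards [self_mem_nhdsWithin] with x hx using (sub_inv_mul_zetaE hq0 hx).symm

/-- The residue of `ζ^E` at `x = q⁻¹` is `ϑ(q₁)ϑ(q₂)/(q·ϑ(q))`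
(where `q = q₁q₂ ∉ p^ℤ`). -/
theorem zetaE_residue_at_q_inv (p : ℂ)
    (hp0 : 0 < ‖p‖) (hp1 : ‖p‖ < 1)
    (q₁ q₂ : ℂ) (hq₁ : q₁ ≠ 0) (hq₂ : q₂ ≠ 0)
    (hq : ∀ n : ℤ, q₁ * q₂ ≠ p ^ n) :
    Tendsto (fun x : ℂ => (x - (q₁ * q₂)⁻¹) * zetaE p q₁ q₂ x) (𝓝[≠] (q₁ * q₂)⁻¹)
      (𝓝 (jTheta p q₁ * jTheta p q₂ / ((q₁ * q₂) * jTheta p (q₁ * q₂)))) :=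
  zetaE_residue_at_q_inv_general p hp1 q₁ q₂ hq₁ hq₂ hq
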